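/- (Dieudonné) Let g ≥ 3. The group O(2g, ℤ/2) is generated by the ℤ/2-transvections 𝕋_z, where z ranges over all elements of V = (ℤ/2)^{2g} with q(z) = 1. -/
import Mathlib


namespace Paper

/-- `V g = (ℤ/2)^{2g}`, with basis indexed by `Fin g × Bool`:
`(i, false)` corresponds to `x_i` and `(i, true)` to `y_i`. -/
abbrev V (g : ℕ) := (Fin g × Bool) → ZMod 2

/-- The basis vector `x_i`. -/
def xb {g : ℕ} (i : Fin g) : V g := Pi.single (i, false) 1

/-- The basis vector `y_i`. -/
def yb {g : ℕ} (i : Fin g) : V g := Pi.single (i, true) 1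

/-- The standard symplectic form `(,)_2` on `(ℤ/2)^{2g}`, determined by
`(x_i, y_j)_2 = δ_{ij}` and `(x_i, x_j)_2 = (y_i, y_j)_2 = 0`. -/
def omg2 {g : ℕ} (a b : V g) : ZMod 2 :=
  ∑ i : Fin g, (a (i, false) * b (i, true) - a (i, true) * b (i, false))

/-- The quadratic form `q` on `(ℤ/2)^{2g}` with `q(x_i) = q(y_i) = 0` and
`q(u + v) = q(u) + q(v) + (u, v)_2`. -/
def qf {g : ℕ} (v : V g) : ZMod 2 :=
  ∑ i : Fin g, v (i, false) * v (i, true)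

lemma omg2_add_right {g : ℕ} (a v w : V g) : omg2 a (v + w) = omg2 a v + omg2 a w := by
  simp only [omg2, Pi.add_apply]
  rw [← Finset.sum_add_distrib]
  exact Finset.sum_congr rfl fun i _ => by ring

lemma omg2_sub_right {g : ℕ} (a v w : V g) : omg2 a (v - w) = omg2 a v - omg2 a w := by
  simp only [omg2, Pi.sub_apply]
  rw [← Finset.sum_sub_distrib]
  exact Finset.sum_congr rfl fun i _ => by ring

lemma omg2_smul_right {g : ℕ} (a : V g) (c : ZMod 2) (v : V g) :
    omg2 a (c • v) = c * omg2 a v := by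
  simp only [omg2, Pi.smul_apply, smul_eq_mul]
  rw [Finset.mul_sum]
  exact Finset.sum_congr rfl fun i _ => by ring

lemma omg2_self {g : ℕ} (a : V g) : omg2 a a = 0 :=
  Finset.sum_eq_zero fun i _ => by ring

/-- The `ℤ/2`-transvection `𝕋_z : v ↦ v + (z, v)_2·z`, as a linear
automorphism of `(ℤ/2)^{2g}`. -/
def Tz {g : ℕ} (z : V g) : V g ≃ₗ[ZMod 2] V g where
  toFun v := v + omg2 z v • z
  invFun v := v - omg2 z v • z
  map_add' v w := by
    show (v + w) + omg2 z (v + w) • z = (v + omg2 z v • z) + (w + omg2 z w • z)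
    rw [omg2_add_right, add_smul]; abel
  map_smul' c v := by
    show (c • v) + omg2 z (c • v) • z = c • (v + omg2 z v • z)
    rw [omg2_smul_right, mul_smul, smul_add]
  left_inv v := by
    show v + omg2 z v • z - omg2 z (v + omg2 z v • z) • z = v
    rw [omg2_add_right, omg2_smul_right, omg2_self, mul_zero, add_zero]
    abel
  right_inv v := by
    show v - omg2 z v • z + omg2 z (v - omg2 z v • z) • z = v
    rw [omg2_sub_right, omg2_smul_right, omg2_self, mul_zero, sub_zero]
    abel

/-- `O(2g, ℤ/2)`: the group of linear automorphisms of `(ℤ/2)^{2g}`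
preserving the quadratic form `q`. -/
def Oq (g : ℕ) : Subgroup (V g ≃ₗ[ZMod 2] V g) where
  carrier := {φ | ∀ v : V g, qf (φ v) = qf v}
  one_mem' := fun v => rfl
  mul_mem' := by
    intro φ ψ hφ hψ v
    exact (hφ (ψ v)).trans (hψ v)
  inv_mem' := by
    intro φ hφ v
    have h := hφ (φ⁻¹ v)
    have h1 : φ (φ⁻¹ v) = v := φ.apply_symm_apply v
    rw [h1] at h
    exact h.symm

-- ===== basic ZMod 2 and form lemmas =====
lemma z2cases (a : ZMod 2) : a = 0 ∨ a = 1 := by revert a; decide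

lemma z2neg (a : ZMod 2) : -a = a := by revert a; decide

lemma z2addself (a : ZMod 2) : a + a = 0 := by revert a; decide

lemma vaddself {g : ℕ} (v : V g) : v + v = 0 := by
  funext p; exact z2addself (v p)

lemma vcancel {g : ℕ} {a b c : V g} (h : a = b + c) : b = a + c := by
  rw [h, add_assoc, vaddself, add_zero]

lemma omg2_comm {g : ℕ} (a b : V g) : omg2 a b = omg2 b a := by
  unfold omg2
  apply Finset.sum_congr rfl
  intro i _
  rw [← z2neg (b (i, false) * a (i, true) - b (i, true) * a (i, false))]
  ring

lemma omg2_add_left {g : ℕ} (a b v : V g) : omg2 (a + b) v = omg2 a v + omg2 b v := by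
  rw [omg2_comm, omg2_add_right, omg2_comm v a, omg2_comm v b]

lemma omg2_smul_left {g : ℕ} (c : ZMod 2) (a v : V g) :
    omg2 (c • a) v = c * omg2 a v := by
  rw [omg2_comm, omg2_smul_right, omg2_comm v a]

lemma omg2_zero_right {g : ℕ} (a : V g) : omg2 a 0 = 0 := by
  unfold omg2
  exact Finset.sum_eq_zero fun i _ => by simp

lemma omg2_zero_left {g : ℕ} (a : V g) : omg2 0 a = 0 := by
  rw [omg2_comm]; exact omg2_zero_right a

lemma omg2_expand {g : ℕ} (a b z w : V g) (c d : ZMod 2) :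
    omg2 (a + c • z) (b + d • w)
      = omg2 a b + d * omg2 a w + c * omg2 z b + c * (d * omg2 z w) := by
  rw [omg2_add_left, omg2_add_right, omg2_add_right, omg2_smul_left, omg2_smul_left,
    omg2_smul_right, omg2_smul_right]
  ring

lemma omg2_apply_xb {g : ℕ} (a : V g) (i : Fin g) : omg2 a (xb i) = a (i, true) := by
  unfold omg2 xb
  rw [Finset.sum_eq_single i]
  · simp [Pi.single_apply, zero_sub, z2neg]
  · intro j _ hj
    simp [Pi.single_apply, hj]
  · intro h; exact absurd (Finset.mem_univ i) h

lemma omg2_apply_yb {g : ℕ} (a : V g) (i : Fin g) : omg2 a (yb i) = a (i, false) := by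
  unfold omg2 yb
  rw [Finset.sum_eq_single i]
  · simp [Pi.single_apply]
  · intro j _ hj
    simp [Pi.single_apply, hj]
  · intro h; exact absurd (Finset.mem_univ i) h

lemma omg2_nondeg {g : ℕ} {a : V g} (h : ∀ w, omg2 a w = 0) : a = 0 := by
  funext p
  obtain ⟨i, b⟩ := p
  cases b
  · have := h (yb i); rwa [omg2_apply_yb] at this
  · have := h (xb i); rwa [omg2_apply_xb] at this

lemma qf_add {g : ℕ} (a b : V g) : qf (a + b) = qf a + qf b + omg2 a b := by
  unfold qf omg2
  rw [← Finset.sum_add_distrib, ← Finset.sum_add_distrib]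
  apply Finset.sum_congr rfl
  intro i _
  simp only [Pi.add_apply]
  have key : ∀ p q r s : ZMod 2, (p + r) * (q + s) = p * q + r * s + (p * s - q * r) := by
    decide
  exact key _ _ _ _

lemma qf_smul {g : ℕ} (c : ZMod 2) (a : V g) : qf (c • a) = c * qf a := by
  unfold qf
  rw [Finset.mul_sum]
  apply Finset.sum_congr rfl
  intro i _
  simp only [Pi.smul_apply, smul_eq_mul]
  have key : ∀ c p q : ZMod 2, c * p * (c * q) = c * (p * q) := by decide
  exact key _ _ _

lemma qf_zero {g : ℕ} : qf (0 : V g) = 0 :=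
  Finset.sum_eq_zero fun i _ => by simp

lemma Tz_apply {g : ℕ} (z v : V g) : Tz z v = v + omg2 z v • z := rfl

lemma Tz_fix {g : ℕ} {z v : V g} (h : omg2 z v = 0) : Tz z v = v := by
  rw [Tz_apply, h, zero_smul, add_zero]

lemma Tz_move {g : ℕ} {u v : V g} (h : omg2 u v = 1) : Tz (u + v) u = v := by
  rw [Tz_apply, omg2_add_left, omg2_self, zero_add, omg2_comm, h, one_smul]
  rw [← add_assoc, vaddself, zero_add]

lemma Tz_omg2 {g : ℕ} (z a b : V g) : omg2 (Tz z a) (Tz z b) = omg2 a b := by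
  rw [Tz_apply, Tz_apply, omg2_expand, omg2_self, omg2_comm a z]
  generalize omg2 a b = p
  generalize omg2 z a = x
  generalize omg2 z b = y
  revert p x y; decide

lemma Tz_mem_Oq {g : ℕ} {z : V g} (hz : qf z = 1) : Tz z ∈ Oq g := by
  intro v
  rw [Tz_apply, qf_add, qf_smul, omg2_smul_right, hz, omg2_comm v z]
  generalize qf v = p
  generalize omg2 z v = c
  revert p c; decide
-- ===== generating sets =====
/-- orthogonal transvection set -/
def TsetO (g : ℕ) : Set (V g ≃ₗ[ZMod 2] V g) := {φ | ∃ z : V g, qf z = 1 ∧ φ = Tz z}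

/-- symplectic transvection set -/
def TsetS (g : ℕ) : Set (V g ≃ₗ[ZMod 2] V g) := {φ | ∃ z : V g, z ≠ 0 ∧ φ = Tz z}

/-- symplectic group as subgroup -/
def SpS (g : ℕ) : Subgroup (V g ≃ₗ[ZMod 2] V g) where
  carrier := {φ | ∀ a b : V g, omg2 (φ a) (φ b) = omg2 a b}
  one_mem' := fun a b => rfl
  mul_mem' := by
    intro φ ψ hφ hψ a b
    exact (hφ (ψ a) (ψ b)).trans (hψ a b)
  inv_mem' := by
    intro φ hφ a b
    have h := hφ (φ⁻¹ a) (φ⁻¹ b)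
    have h1 : φ (φ⁻¹ a) = a := φ.apply_symm_apply a
    have h2 : φ (φ⁻¹ b) = b := φ.apply_symm_apply b
    rw [h1, h2] at h
    exact h.symm

lemma mem_SpS {g : ℕ} {φ : V g ≃ₗ[ZMod 2] V g} :
    φ ∈ SpS g ↔ ∀ a b : V g, omg2 (φ a) (φ b) = omg2 a b := Iff.rfl

lemma mem_Oq {g : ℕ} {φ : V g ≃ₗ[ZMod 2] V g} :
    φ ∈ Oq g ↔ ∀ v : V g, qf (φ v) = qf v := Iff.rfl

lemma mul_apply {g : ℕ} (φ ψ : V g ≃ₗ[ZMod 2] V g) (v : V g) : (φ * ψ) v = φ (ψ v) := rfl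

lemma inv_apply {g : ℕ} (φ : V g ≃ₗ[ZMod 2] V g) (v : V g) : (φ⁻¹) v = φ.symm v := rfl

lemma Oq_omg2 {g : ℕ} {φ : V g ≃ₗ[ZMod 2] V g} (hφ : φ ∈ Oq g) (a b : V g) :
    omg2 (φ a) (φ b) = omg2 a b := by
  have h1 := hφ (a + b)
  rw [map_add, qf_add, qf_add, hφ a, hφ b] at h1
  exact add_left_cancel h1

lemma Oq_le_SpS {g : ℕ} : Oq g ≤ SpS g := fun φ hφ => Oq_omg2 hφ

lemma closureS_le_SpS {g : ℕ} : Subgroup.closure (TsetS g) ≤ SpS g := by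
  rw [Subgroup.closure_le]
  rintro φ ⟨z, _, rfl⟩
  exact fun a b => Tz_omg2 z a b

lemma closureO_le_Oq {g : ℕ} : Subgroup.closure (TsetO g) ≤ Oq g := by
  rw [Subgroup.closure_le]
  rintro φ ⟨z, hz, rfl⟩
  exact Tz_mem_Oq hz

lemma z2ne1 {a : ZMod 2} (h : a ≠ 1) : a = 0 := by
  rcases z2cases a with h0 | h1
  · exact h0
  · exact absurd h1 h

-- existence of a common "pairing" vector
lemma exists_pair_sp {g : ℕ} {u v : V g} (hu : u ≠ 0) (hv : v ≠ 0) :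
    ∃ w : V g, omg2 u w = 1 ∧ omg2 v w = 1 := by
  have h1 : ∃ w1, omg2 u w1 = 1 := by
    by_contra h
    push_neg at h
    exact hu (omg2_nondeg fun w => z2ne1 (h w))
  have h2 : ∃ w2, omg2 v w2 = 1 := by
    by_contra h
    push_neg at h
    exact hv (omg2_nondeg fun w => z2ne1 (h w))
  obtain ⟨w1, hw1⟩ := h1
  obtain ⟨w2, hw2⟩ := h2
  rcases z2cases (omg2 v w1) with hv1 | hv1
  · rcases z2cases (omg2 u w2) with hu2 | hu2
    · exact ⟨w1 + w2, by rw [omg2_add_right, hw1, hu2, add_zero],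
        by rw [omg2_add_right, hv1, hw2, zero_add]⟩
    · exact ⟨w2, hu2, hw2⟩
  · exact ⟨w1, hw1, hv1⟩

lemma moveSp {g : ℕ} (u v : V g) (hu : u ≠ 0) (hv : v ≠ 0) :
    ∃ θ : V g ≃ₗ[ZMod 2] V g, θ ∈ Subgroup.closure (TsetS g) ∧ θ u = v := by
  by_cases heq : u = v
  · exact ⟨1, Subgroup.one_mem _, by rw [heq]; rfl⟩
  rcases z2cases (omg2 u v) with h0 | h1
  swap
  · refine ⟨Tz (u + v), Subgroup.subset_closure ⟨u + v, ?_, rfl⟩, Tz_move h1⟩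
    intro hz
    have := vcancel hz.symm
    rw [zero_add] at this
    exact heq this
  obtain ⟨w, hw1, hw2⟩ := exists_pair_sp hu hv
  have huw : u + w ≠ 0 := by
    intro hz
    have := vcancel hz.symm
    rw [zero_add] at this
    rw [← this, omg2_self] at hw1
    exact one_ne_zero hw1.symm
  have hwv : w + v ≠ 0 := by
    intro hz
    have := vcancel hz.symm
    rw [zero_add] at this
    rw [this, omg2_self] at hw2
    exact one_ne_zero hw2.symm
  refine ⟨Tz (w + v) * Tz (u + w), ?_, ?_⟩
  · exact Subgroup.mul_mem _ (Subgroup.subset_closure ⟨w + v, hwv, rfl⟩)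
      (Subgroup.subset_closure ⟨u + w, huw, rfl⟩)
  · rw [mul_apply, Tz_move hw1, Tz_move (by rw [omg2_comm]; exact hw2)]

lemma moveSp2 {m : ℕ} (u : V (m + 1)) (hxu : omg2 (xb 0) u = 1) :
    ∃ θ : V (m + 1) ≃ₗ[ZMod 2] V (m + 1), θ ∈ Subgroup.closure (TsetS (m + 1)) ∧
      θ u = yb 0 ∧ θ (xb 0) = xb 0 := by
  have hxy : omg2 (xb (0 : Fin (m + 1))) (yb 0) = 1 := by
    rw [omg2_apply_yb]; exact Pi.single_eq_same _ 1
  have hyx : omg2 (yb (0 : Fin (m + 1))) (xb 0) = 1 := by rw [omg2_comm]; exact hxy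
  have hux : omg2 u (xb 0) = 1 := by rw [omg2_comm]; exact hxu
  have hu0 : u ≠ 0 := by
    intro h; rw [h, omg2_zero_right] at hxu; exact one_ne_zero hxu.symm
  have hy0 : yb (0 : Fin (m + 1)) ≠ 0 := by
    intro h
    rw [h, omg2_zero_right] at hxy
    exact one_ne_zero hxy.symm
  by_cases heq : u = yb 0
  · exact ⟨1, Subgroup.one_mem _, by rw [heq]; rfl, rfl⟩
  rcases z2cases (omg2 u (yb 0)) with h0 | h1
  swap
  · refine ⟨Tz (u + yb 0), Subgroup.subset_closure ⟨u + yb 0, ?_, rfl⟩, Tz_move h1, ?_⟩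
    · intro hz
      have := vcancel hz.symm
      rw [zero_add] at this
      exact heq this
    · apply Tz_fix
      rw [omg2_add_left, hux, hyx]
      decide
  obtain ⟨w', hw1, hw2⟩ := exists_pair_sp hu0 hy0
  -- adjust w' so that it also pairs to 1 with x
  obtain ⟨w, hwu, hwy, hwx⟩ :
      ∃ w, omg2 u w = 1 ∧ omg2 (yb (0 : Fin (m+1))) w = 1 ∧ omg2 (xb (0 : Fin (m+1))) w = 1 := by
    rcases z2cases (omg2 (xb (0 : Fin (m+1))) w') with hx0 | hx1
    · refine ⟨w' + yb 0, ?_, ?_, ?_⟩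
      · rw [omg2_add_right, hw1, h0, add_zero]
      · rw [omg2_add_right, hw2, omg2_self, add_zero]
      · rw [omg2_add_right, hx0, hxy, zero_add]
    · exact ⟨w', hw1, hw2, hx1⟩
  have huw : u + w ≠ 0 := by
    intro hz
    have := vcancel hz.symm
    rw [zero_add] at this
    rw [← this, omg2_self] at hwu
    exact one_ne_zero hwu.symm
  have hwy' : w + yb 0 ≠ 0 := by
    intro hz
    have := vcancel hz.symm
    rw [zero_add] at this
    rw [this, omg2_comm, omg2_self] at hwy
    exact one_ne_zero hwy.symm
  refine ⟨Tz (w + yb 0) * Tz (u + w), ?_, ?_, ?_⟩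
  · exact Subgroup.mul_mem _ (Subgroup.subset_closure ⟨w + yb 0, hwy', rfl⟩)
      (Subgroup.subset_closure ⟨u + w, huw, rfl⟩)
  · rw [mul_apply, Tz_move hwu, Tz_move (by rw [omg2_comm]; exact hwy)]
  · have hwx' : omg2 w (xb (0 : Fin (m+1))) = 1 := by rw [omg2_comm]; exact hwx
    have h1 : Tz (u + w) (xb (0 : Fin (m+1))) = xb 0 :=
      Tz_fix (by rw [omg2_add_left, hux, hwx']; decide)
    have h2 : Tz (w + yb 0) (xb (0 : Fin (m+1))) = xb 0 :=
      Tz_fix (by rw [omg2_add_left, hwx', hyx]; decide)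
    rw [mul_apply, h1, h2]
-- ===== restriction / extension maps =====
/-- restriction: forget the 0-th hyperbolic coordinate pair -/
def rmap (m : ℕ) : V (m + 1) →ₗ[ZMod 2] V m :=
  LinearMap.funLeft (ZMod 2) (ZMod 2) (fun p => (p.1.succ, p.2))

/-- extension by zero -/
def emap (m : ℕ) : V m →ₗ[ZMod 2] V (m + 1) where
  toFun v := fun p => Fin.cases 0 (fun i => v (i, p.2)) p.1
  map_add' v w := by
    funext p
    obtain ⟨j, b⟩ := p
    induction j using Fin.cases with
    | zero => simp
    | succ i => simp
  map_smul' c v := by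
    funext p
    obtain ⟨j, b⟩ := p
    induction j using Fin.cases with
    | zero => simp
    | succ i => simp

lemma rmap_apply {m : ℕ} (v : V (m + 1)) (i : Fin m) (b : Bool) :
    rmap m v (i, b) = v (i.succ, b) := rfl

lemma emap_apply_zero {m : ℕ} (v : V m) (b : Bool) : emap m v (0, b) = 0 := rfl

lemma emap_apply_succ {m : ℕ} (v : V m) (i : Fin m) (b : Bool) :
    emap m v (i.succ, b) = v (i, b) := by
  show (Fin.cases 0 (fun j => v (j, b)) (Fin.succ i) : ZMod 2) = v (i, b)
  rw [Fin.cases_succ]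

lemma rmap_emap {m : ℕ} (v : V m) : rmap m (emap m v) = v := by
  funext p
  obtain ⟨i, b⟩ := p
  rw [rmap_apply, emap_apply_succ]

lemma emap_inj {m : ℕ} : Function.Injective (emap m) := by
  intro a b h
  have := congrArg (rmap m) h
  rwa [rmap_emap, rmap_emap] at this

lemma xb_apply_succ {m : ℕ} (i : Fin m) (b : Bool) : (xb (0 : Fin (m+1))) (i.succ, b) = 0 :=
  Pi.single_eq_of_ne (by simp [Prod.ext_iff, Fin.succ_ne_zero]) 1

lemma yb_apply_succ {m : ℕ} (i : Fin m) (b : Bool) : (yb (0 : Fin (m+1))) (i.succ, b) = 0 :=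
  Pi.single_eq_of_ne (by simp [Prod.ext_iff, Fin.succ_ne_zero]) 1

lemma rmap_xb {m : ℕ} : rmap m (xb 0) = 0 := by
  funext p
  obtain ⟨i, b⟩ := p
  rw [rmap_apply, xb_apply_succ]
  rfl

lemma rmap_yb {m : ℕ} : rmap m (yb 0) = 0 := by
  funext p
  obtain ⟨i, b⟩ := p
  rw [rmap_apply, yb_apply_succ]
  rfl

lemma xb_apply_zero {m : ℕ} (b : Bool) :
    (xb (0 : Fin (m+1))) (0, b) = if b = false then 1 else 0 := by
  cases b <;> simp [xb, Pi.single_apply]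

lemma yb_apply_zero {m : ℕ} (b : Bool) :
    (yb (0 : Fin (m+1))) (0, b) = if b = true then 1 else 0 := by
  cases b <;> simp [yb, Pi.single_apply]

/-- the hyperbolic-pair decomposition of `V (m+1)` -/
lemma decompV {m : ℕ} (v : V (m + 1)) :
    v = emap m (rmap m v) + v (0, false) • xb 0 + v (0, true) • yb 0 := by
  funext p
  obtain ⟨j, b⟩ := p
  induction j using Fin.cases with
  | zero =>
    simp only [Pi.add_apply, Pi.smul_apply, emap_apply_zero, xb_apply_zero, yb_apply_zero,
      smul_eq_mul, zero_add]
    cases b <;> simp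
  | succ i =>
    simp only [Pi.add_apply, Pi.smul_apply, emap_apply_succ, xb_apply_succ, yb_apply_succ,
      rmap_apply, smul_eq_mul, mul_zero, add_zero]

lemma omg2_emap_left {m : ℕ} (z : V m) (v : V (m + 1)) :
    omg2 (emap m z) v = omg2 z (rmap m v) := by
  unfold omg2
  rw [Fin.sum_univ_succ, emap_apply_zero, emap_apply_zero, zero_mul, zero_mul, sub_zero,
    zero_add]
  apply Finset.sum_congr rfl
  intro i _
  rw [emap_apply_succ, emap_apply_succ, rmap_apply, rmap_apply]

lemma omg2_emap {m : ℕ} (a b : V m) :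
    omg2 (emap m a) (emap m b) = omg2 a b := by
  rw [omg2_emap_left, rmap_emap]

lemma qf_emap {m : ℕ} (a : V m) : qf (emap m a) = qf a := by
  unfold qf
  rw [Fin.sum_univ_succ, emap_apply_zero, zero_mul, zero_add]
  apply Finset.sum_congr rfl
  intro i _
  rw [emap_apply_succ, emap_apply_succ]
-- ===== lifting along the hyperbolic-pair decomposition =====
lemma omg2_xb_yb {m : ℕ} : omg2 (xb (0 : Fin (m+1))) (yb 0) = 1 := by
  rw [omg2_apply_yb]
  exact Pi.single_eq_same _ 1

lemma xb0_ne_zero {m : ℕ} : xb (0 : Fin (m+1)) ≠ 0 := by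
  intro h
  have : omg2 (xb (0 : Fin (m+1))) (yb 0) = 1 := omg2_xb_yb
  rw [h, omg2_zero_left] at this
  exact one_ne_zero this.symm

lemma yb0_ne_zero {m : ℕ} : yb (0 : Fin (m+1)) ≠ 0 := by
  intro h
  have : omg2 (xb (0 : Fin (m+1))) (yb 0) = 1 := omg2_xb_yb
  rw [h, omg2_zero_right] at this
  exact one_ne_zero this.symm

lemma rmap3 {m : ℕ} (u : V m) (a b : ZMod 2) :
    rmap m (emap m u + a • xb 0 + b • yb 0) = u := by
  rw [map_add, map_add, map_smul, map_smul, rmap_emap, rmap_xb, rmap_yb, smul_zero,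
    smul_zero, add_zero, add_zero]

lemma eval0f {m : ℕ} (u : V m) (a b : ZMod 2) :
    (emap m u + a • xb 0 + b • yb 0 : V (m+1)) (0, false) = a := by
  simp only [Pi.add_apply, Pi.smul_apply, emap_apply_zero, xb_apply_zero, yb_apply_zero,
    smul_eq_mul]
  simp

lemma eval0t {m : ℕ} (u : V m) (a b : ZMod 2) :
    (emap m u + a • xb 0 + b • yb 0 : V (m+1)) (0, true) = b := by
  simp only [Pi.add_apply, Pi.smul_apply, emap_apply_zero, xb_apply_zero, yb_apply_zero,
    smul_eq_mul]
  simp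

/-- lift of an automorphism of `V m` to `V (m+1)`, fixing `x_0, y_0` -/
def liftE {m : ℕ} (θ : V m ≃ₗ[ZMod 2] V m) : V (m + 1) ≃ₗ[ZMod 2] V (m + 1) where
  toFun v := emap m (θ (rmap m v)) + v (0, false) • xb 0 + v (0, true) • yb 0
  invFun v := emap m (θ.symm (rmap m v)) + v (0, false) • xb 0 + v (0, true) • yb 0
  map_add' v w := by
    simp only [map_add, Pi.add_apply, add_smul]
    abel
  map_smul' c v := by
    simp only [map_smul, Pi.smul_apply, smul_eq_mul, mul_smul, smul_add, RingHom.id_apply]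
  left_inv v := by
    simp only [rmap3, eval0f, eval0t, LinearEquiv.symm_apply_apply]
    exact (decompV v).symm
  right_inv v := by
    simp only [rmap3, eval0f, eval0t, LinearEquiv.apply_symm_apply]
    exact (decompV v).symm

lemma liftE_apply {m : ℕ} (θ : V m ≃ₗ[ZMod 2] V m) (v : V (m+1)) :
    liftE θ v = emap m (θ (rmap m v)) + v (0, false) • xb 0 + v (0, true) • yb 0 := rfl

lemma liftE_mul {m : ℕ} (θ θ' : V m ≃ₗ[ZMod 2] V m) :
    liftE (θ * θ') = liftE θ * liftE θ' := by
  apply LinearEquiv.ext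
  intro v
  rw [mul_apply, liftE_apply, liftE_apply, liftE_apply, rmap3, eval0f, eval0t, mul_apply]

/-- lift as a group homomorphism -/
def liftHom (m : ℕ) : (V m ≃ₗ[ZMod 2] V m) →* (V (m + 1) ≃ₗ[ZMod 2] V (m + 1)) :=
  MonoidHom.mk' liftE (fun θ θ' => liftE_mul θ θ')

lemma liftE_Tz {m : ℕ} (z : V m) : liftE (Tz z) = Tz (emap m z) := by
  apply LinearEquiv.ext
  intro v
  rw [liftE_apply, Tz_apply, Tz_apply, omg2_emap_left, map_add, map_smul]
  generalize omg2 z (rmap m v) = c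
  conv_rhs => rw [decompV v]
  abel

lemma liftE_closure {m : ℕ} {θ : V m ≃ₗ[ZMod 2] V m}
    (h : θ ∈ Subgroup.closure (TsetS m)) :
    liftE θ ∈ Subgroup.closure (TsetS (m + 1)) := by
  have h1 : liftHom m θ ∈ Subgroup.map (liftHom m) (Subgroup.closure (TsetS m)) :=
    Subgroup.mem_map_of_mem _ h
  rw [MonoidHom.map_closure] at h1
  have h2 : (liftHom m) '' TsetS m ⊆ TsetS (m + 1) := by
    rintro _ ⟨φ, ⟨z, hz, rfl⟩, rfl⟩
    refine ⟨emap m z, fun hc => hz (emap_inj (by rw [hc]; exact (map_zero _).symm)), ?_⟩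
    exact liftE_Tz z
  exact Subgroup.closure_mono h2 h1

-- ===== generation of the symplectic group by transvections =====
theorem sp_gen (m : ℕ) (ψ : V m ≃ₗ[ZMod 2] V m) (hψ : ψ ∈ SpS m) :
    ψ ∈ Subgroup.closure (TsetS m) := by
  induction m with
  | zero =>
    have : ψ = 1 := LinearEquiv.ext fun v => funext fun p => p.1.elim0
    rw [this]
    exact Subgroup.one_mem _
  | succ m ih =>
    have hψx0 : ψ (xb 0) ≠ 0 := fun h => xb0_ne_zero (ψ.map_eq_zero_iff.mp h)
    obtain ⟨θ1, hθ1, hθ1x⟩ := moveSp (ψ (xb 0)) (xb 0) hψx0 xb0_ne_zero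
    set ψ1 : V (m+1) ≃ₗ[ZMod 2] V (m+1) := θ1 * ψ with hψ1def
    have hψ1 : ψ1 ∈ SpS (m + 1) := Subgroup.mul_mem _ (closureS_le_SpS hθ1) hψ
    have hψ1x : ψ1 (xb 0) = xb 0 := hθ1x
    have hxu : omg2 (xb 0) (ψ1 (yb 0)) = 1 := by
      have h := hψ1 (xb 0) (yb 0)
      rw [hψ1x] at h
      rw [h]
      exact omg2_xb_yb
    obtain ⟨θ2, hθ2, hθ2u, hθ2x⟩ := moveSp2 (ψ1 (yb 0)) hxu
    set ψ2 : V (m+1) ≃ₗ[ZMod 2] V (m+1) := θ2 * ψ1 with hψ2def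
    have hψ2 : ψ2 ∈ SpS (m + 1) := Subgroup.mul_mem _ (closureS_le_SpS hθ2) hψ1
    have hψ2x : ψ2 (xb 0) = xb 0 := by
      show θ2 (ψ1 (xb 0)) = xb 0
      rw [hψ1x, hθ2x]
    have hψ2y : ψ2 (yb 0) = yb 0 := hθ2u
    -- the restriction to the complement of the hyperbolic pair
    have hperp : ∀ (φ : V (m+1) ≃ₗ[ZMod 2] V (m+1)), φ ∈ SpS (m+1) →
        φ (xb 0) = xb 0 → φ (yb 0) = yb 0 →
        ∀ a : V m, emap m (rmap m (φ (emap m a))) = φ (emap m a) := by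
      intro φ hφ hφx hφy a
      have hf : (φ (emap m a)) (0, false) = 0 := by
        rw [← omg2_apply_yb (φ (emap m a)) 0, ← hφy, hφ, omg2_apply_yb, emap_apply_zero]
      have ht : (φ (emap m a)) (0, true) = 0 := by
        rw [← omg2_apply_xb (φ (emap m a)) 0, ← hφx, hφ, omg2_apply_xb, emap_apply_zero]
      have h := decompV (φ (emap m a))
      rw [hf, ht, zero_smul, zero_smul, add_zero, add_zero] at h
      exact h.symm
    have hψ2invx : ψ2⁻¹ (xb 0) = xb 0 := by
      rw [inv_apply, LinearEquiv.symm_apply_eq, hψ2x]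
    have hψ2invy : ψ2⁻¹ (yb 0) = yb 0 := by
      rw [inv_apply, LinearEquiv.symm_apply_eq, hψ2y]
    set θ' : V m ≃ₗ[ZMod 2] V m :=
      { toFun := fun a => rmap m (ψ2 (emap m a))
        invFun := fun a => rmap m (ψ2⁻¹ (emap m a))
        map_add' := fun a b => by simp only [map_add]
        map_smul' := fun c a => by simp only [map_smul, RingHom.id_apply]
        left_inv := fun a => by
          show rmap m (ψ2⁻¹ (emap m (rmap m (ψ2 (emap m a))))) = a
          rw [hperp ψ2 hψ2 hψ2x hψ2y a, inv_apply, LinearEquiv.symm_apply_apply, rmap_emap]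
        right_inv := fun a => by
          show rmap m (ψ2 (emap m (rmap m (ψ2⁻¹ (emap m a))))) = a
          rw [hperp ψ2⁻¹ (Subgroup.inv_mem _ hψ2) hψ2invx hψ2invy a, inv_apply,
            LinearEquiv.apply_symm_apply, rmap_emap] } with hθ'def
    have hθ'app : ∀ a : V m, θ' a = rmap m (ψ2 (emap m a)) := fun a => rfl
    have hθ'sp : θ' ∈ SpS m := by
      intro a b
      rw [hθ'app, hθ'app, ← omg2_emap (rmap m (ψ2 (emap m a))),
        hperp ψ2 hψ2 hψ2x hψ2y a, hperp ψ2 hψ2 hψ2x hψ2y b, hψ2, omg2_emap]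
    have hθ'cl := ih θ' hθ'sp
    have hlift : ψ2 = liftE θ' := by
      apply LinearEquiv.ext
      intro v
      conv_lhs => rw [decompV v]
      rw [map_add, map_add, map_smul, map_smul, hψ2x, hψ2y, liftE_apply, hθ'app,
        hperp ψ2 hψ2 hψ2x hψ2y (rmap m v)]
    have hψ2cl : ψ2 ∈ Subgroup.closure (TsetS (m+1)) := by
      rw [hlift]
      exact liftE_closure hθ'cl
    have hfinal : θ1⁻¹ * (θ2⁻¹ * ψ2) = ψ := by
      rw [hψ2def, hψ1def]
      group
    rw [← hfinal]
    exact Subgroup.mul_mem _ (Subgroup.inv_mem _ hθ1)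
      (Subgroup.mul_mem _ (Subgroup.inv_mem _ hθ2) hψ2cl)
-- ===== the orthogonal existence lemma (dimension count) =====
lemma z2eq {a b : ZMod 2} (h : a + b = 0) : a = b := by revert h; revert a b; decide

/-- `omg2` as a bilinear map -/
def omL {g : ℕ} : V g →ₗ[ZMod 2] V g →ₗ[ZMod 2] ZMod 2 :=
  LinearMap.mk₂ (ZMod 2) omg2 omg2_add_left
    (fun c a v => by rw [omg2_smul_left, smul_eq_mul])
    omg2_add_right
    (fun c a v => by rw [omg2_smul_right, smul_eq_mul])

lemma omL_apply {g : ℕ} (a b : V g) : omL a b = omg2 a b := rfl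

lemma omL_inj {g : ℕ} : Function.Injective (omL (g := g)) := by
  intro a b hab
  have h0 : a + b = 0 := by
    apply omg2_nondeg
    intro w
    have := LinearMap.congr_fun hab w
    rw [omL_apply, omL_apply] at this
    rw [omg2_add_left, this, z2addself]
  have := vcancel (show (0 : V g) = a + b from h0.symm)
  rw [zero_add] at this
  exact this.symm ▸ (by rw [← this] : a = b)

lemma qf_ne_zero {g : ℕ} {u : V g} (hu : qf u = 1) : u ≠ 0 := by
  intro h
  rw [h, qf_zero] at hu
  exact zero_ne_one hu

lemma exists_w {g : ℕ} (hg : 3 ≤ g) {u v : V g} (hu : qf u = 1) (hv : qf v = 1) :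
    ∃ w, qf w = 1 ∧ omg2 u w = 1 ∧ omg2 v w = 1 := by
  by_contra hcon
  have hA : ∀ w, omg2 u w = 1 → omg2 v w = 1 → qf w = 0 := by
    intro w h1 h2
    rcases z2cases (qf w) with h | h
    · exact h
    · exact absurd ⟨w, h, h1, h2⟩ hcon
  obtain ⟨w0, hw0u, hw0v⟩ := exists_pair_sp (qf_ne_zero hu) (qf_ne_zero hv)
  have hw0q : qf w0 = 0 := hA w0 hw0u hw0v
  set L : V g →ₗ[ZMod 2] ZMod 2 × ZMod 2 := LinearMap.prod (omL u) (omL v) with hLdef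
  set U : Submodule (ZMod 2) (V g) := LinearMap.ker L with hUdef
  have hUmem : ∀ t ∈ U, omg2 u t = 0 ∧ omg2 v t = 0 := by
    intro t ht
    rw [hUdef, LinearMap.mem_ker, hLdef, LinearMap.prod_apply] at ht
    have h1 := congrArg Prod.fst ht
    have h2 := congrArg Prod.snd ht
    exact ⟨h1, h2⟩
  have hqt : ∀ t ∈ U, qf t = omg2 w0 t := by
    intro t ht
    obtain ⟨h1, h2⟩ := hUmem t ht
    have h3 : omg2 u (w0 + t) = 1 := by rw [omg2_add_right, hw0u, h1, add_zero]
    have h4 : omg2 v (w0 + t) = 1 := by rw [omg2_add_right, hw0v, h2, add_zero]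
    have h5 := hA _ h3 h4
    rw [qf_add, hw0q, zero_add] at h5
    exact z2eq h5
  have hUiso : ∀ t ∈ U, ∀ t' ∈ U, omg2 t t' = 0 := by
    intro t ht t' ht'
    have hsum := hqt (t + t') (U.add_mem ht ht')
    rw [qf_add, omg2_add_right, hqt t ht, hqt t' ht'] at hsum
    exact add_eq_left.mp hsum
  -- dimension count
  have hmap_le : Submodule.map omL U ≤ U.dualAnnihilator := by
    rintro _ ⟨t, htU, rfl⟩
    rw [Submodule.mem_dualAnnihilator]
    intro t' ht'U
    exact hUiso t htU t' ht'U
  have hcard : Module.finrank (ZMod 2) (V g) = 2 * g := by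
    rw [Module.finrank_fintype_fun_eq_card]
    simp [Fintype.card_prod, mul_comm]
  have hker := LinearMap.finrank_range_add_finrank_ker L
  rw [← hUdef] at hker
  have hrange : Module.finrank (ZMod 2) (LinearMap.range L) ≤ 2 := by
    have := Submodule.finrank_le (LinearMap.range L)
    have h2 : Module.finrank (ZMod 2) (ZMod 2 × ZMod 2) = 2 := by
      simp [Module.finrank_prod]
    omega
  have hUbig : 2 * g ≤ Module.finrank (ZMod 2) U + 2 := by omega
  have hmapU : Module.finrank (ZMod 2) (Submodule.map omL U) = Module.finrank (ZMod 2) U :=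
    (LinearEquiv.finrank_eq (Submodule.equivMapOfInjective omL omL_inj U)).symm
  have hmono : Module.finrank (ZMod 2) (Submodule.map omL U)
      ≤ Module.finrank (ZMod 2) U.dualAnnihilator := Submodule.finrank_mono hmap_le
  have hann : Module.finrank (ZMod 2) U + Module.finrank (ZMod 2) U.dualAnnihilator
      = Module.finrank (ZMod 2) (V g) := by
    have e : Module.finrank (ZMod 2) (V g ⧸ U) = Module.finrank (ZMod 2) U.dualAnnihilator :=
      LinearEquiv.finrank_eq (Subspace.quotEquivAnnihilator U)
    have q := Submodule.finrank_quotient_add_finrank U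
    omega
  omega

lemma moveO {g : ℕ} (hg : 3 ≤ g) (u v : V g) (hu : qf u = 1) (hv : qf v = 1) :
    ∃ θ : V g ≃ₗ[ZMod 2] V g, θ ∈ Subgroup.closure (TsetO g) ∧ θ u = v := by
  by_cases heq : u = v
  · exact ⟨1, Subgroup.one_mem _, by rw [heq]; rfl⟩
  rcases z2cases (omg2 u v) with h0 | h1
  swap
  · refine ⟨Tz (u + v), Subgroup.subset_closure ⟨u + v, ?_, rfl⟩, Tz_move h1⟩
    rw [qf_add, hu, hv, h1]
    decide
  obtain ⟨w, hwq, hwu, hwv⟩ := exists_w hg hu hv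
  refine ⟨Tz (w + v) * Tz (u + w), ?_, ?_⟩
  · refine Subgroup.mul_mem _ (Subgroup.subset_closure ⟨w + v, ?_, rfl⟩)
      (Subgroup.subset_closure ⟨u + w, ?_, rfl⟩)
    · rw [qf_add, hwq, hv, omg2_comm w v, hwv]
      decide
    · rw [qf_add, hu, hwq, hwu]
      decide
  · rw [mul_apply, Tz_move hwu, Tz_move (by rw [omg2_comm]; exact hwv)]
-- ===== the anisotropic vector e = x_0 + y_0 and its perp =====
lemma qf_xb {g : ℕ} (i : Fin g) : qf (xb i) = 0 := by
  unfold qf xb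
  apply Finset.sum_eq_zero
  intro j _
  simp [Pi.single_apply]

lemma qf_yb {g : ℕ} (i : Fin g) : qf (yb i) = 0 := by
  unfold qf yb
  apply Finset.sum_eq_zero
  intro j _
  simp [Pi.single_apply]

lemma qf_eV {m : ℕ} : qf (xb 0 + yb 0 : V (m+1)) = 1 := by
  rw [qf_add, qf_xb, qf_yb, omg2_xb_yb]
  decide

lemma omg2_emap_eV {m : ℕ} (a : V m) : omg2 (emap m a) (xb 0 + yb 0) = 0 := by
  rw [omg2_add_right, omg2_apply_xb, omg2_apply_yb, emap_apply_zero, emap_apply_zero, add_zero]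

lemma omg2_eV_emap {m : ℕ} (a : V m) : omg2 (xb 0 + yb 0 : V (m+1)) (emap m a) = 0 := by
  rw [omg2_comm]; exact omg2_emap_eV a

lemma rmap_eV {m : ℕ} : rmap m (xb 0 + yb 0) = 0 := by
  rw [map_add, rmap_xb, rmap_yb, add_zero]

lemma omg2_xb_eV {m : ℕ} : omg2 (xb (0 : Fin (m+1))) (xb 0 + yb 0) = 1 := by
  rw [omg2_add_right, omg2_self, omg2_xb_yb, zero_add]

lemma omg2_yb_eV {m : ℕ} : omg2 (yb (0 : Fin (m+1))) (xb 0 + yb 0) = 1 := by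
  rw [omg2_add_right, omg2_self, add_zero, omg2_comm]
  exact omg2_xb_yb

lemma decomp_perp {m : ℕ} (v : V (m+1)) (hv : omg2 v (xb 0 + yb 0) = 0) :
    v = emap m (rmap m v) + v (0, false) • (xb 0 + yb 0) := by
  rw [omg2_add_right, omg2_apply_xb, omg2_apply_yb] at hv
  have hft : v (0, true) = v (0, false) := z2eq hv
  calc v = emap m (rmap m v) + v (0, false) • xb 0 + v (0, true) • yb 0 := decompV v
    _ = emap m (rmap m v) + v (0, false) • (xb 0 + yb 0) := by
        rw [hft, smul_add, add_assoc]

lemma perp_img {m : ℕ} {χ : V (m+1) ≃ₗ[ZMod 2] V (m+1)} (hχ : χ ∈ Oq (m+1))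
    (hχe : χ (xb 0 + yb 0) = xb 0 + yb 0) (w : V (m+1)) (hw : omg2 w (xb 0 + yb 0) = 0) :
    omg2 (χ w) (xb 0 + yb 0) = 0 := by
  rw [← hχe, Oq_omg2 hχ, hw]

/-- decomposition of the image of an embedded vector under an isometry fixing e -/
lemma perp_decomp {m : ℕ} {χ : V (m+1) ≃ₗ[ZMod 2] V (m+1)} (hχ : χ ∈ Oq (m+1))
    (hχe : χ (xb 0 + yb 0) = xb 0 + yb 0) (a : V m) :
    ∃ c : ZMod 2, χ (emap m a) = emap m (rmap m (χ (emap m a))) + c • (xb 0 + yb 0) :=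
  ⟨_, decomp_perp _ (perp_img hχ hχe _ (omg2_emap_eV a))⟩

lemma inv_fix {m : ℕ} {χ : V (m+1) ≃ₗ[ZMod 2] V (m+1)}
    (hχe : χ (xb 0 + yb 0) = xb 0 + yb 0) : χ⁻¹ (xb 0 + yb 0) = xb 0 + yb 0 := by
  rw [inv_apply, LinearEquiv.symm_apply_eq, hχe]

-- ===== pulling products of symplectic transvections back to orthogonal ones =====
lemma pullback {m : ℕ} (ψ : V m ≃ₗ[ZMod 2] V m) (hψ : ψ ∈ Subgroup.closure (TsetS m)) :
    ∃ χ : V (m+1) ≃ₗ[ZMod 2] V (m+1), χ ∈ Subgroup.closure (TsetO (m+1)) ∧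
      χ (xb 0 + yb 0) = xb 0 + yb 0 ∧ ∀ a : V m, rmap m (χ (emap m a)) = ψ a := by
  induction hψ using Subgroup.closure_induction with
  | mem φ hφ =>
    obtain ⟨z, hz, rfl⟩ := hφ
    obtain ⟨z', hq, hr, hperp⟩ :
        ∃ z' : V (m+1), qf z' = 1 ∧ rmap m z' = z ∧ omg2 z' (xb 0 + yb 0) = 0 := by
      rcases z2cases (qf (emap m z)) with h0 | h1
      · refine ⟨emap m z + (xb 0 + yb 0), ?_, ?_, ?_⟩
        · rw [qf_add, h0, qf_eV, omg2_emap_eV]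
          decide
        · rw [map_add, rmap_emap, rmap_eV, add_zero]
        · rw [omg2_add_left, omg2_emap_eV, omg2_self, add_zero]
      · exact ⟨emap m z, h1, rmap_emap z, omg2_emap_eV z⟩
    refine ⟨Tz z', Subgroup.subset_closure ⟨z', hq, rfl⟩, Tz_fix hperp, ?_⟩
    intro a
    rw [Tz_apply, Tz_apply, map_add, map_smul, rmap_emap, hr, omg2_comm z',
      omg2_emap_left, hr, omg2_comm a z]
  | one =>
    exact ⟨1, Subgroup.one_mem _, rfl, fun a => rmap_emap a⟩
  | mul φ φ' hφm hφ'm ihφ ihφ' =>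
    obtain ⟨χ, hχcl, hχe, hχr⟩ := ihφ
    obtain ⟨χ', hχ'cl, hχ'e, hχ'r⟩ := ihφ'
    refine ⟨χ * χ', Subgroup.mul_mem _ hχcl hχ'cl, ?_, ?_⟩
    · rw [mul_apply, hχ'e, hχe]
    · intro a
      obtain ⟨c, hc⟩ := perp_decomp (closureO_le_Oq hχ'cl) hχ'e a
      rw [mul_apply, hc, map_add, map_smul, hχe, map_add, map_smul, rmap_eV, smul_zero,
        add_zero, hχ'r]
      exact hχr (φ' a)
  | inv φ hφm ihφ =>
    obtain ⟨χ, hχcl, hχe, hχr⟩ := ihφ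
    refine ⟨χ⁻¹, Subgroup.inv_mem _ hχcl, inv_fix hχe, ?_⟩
    intro a
    obtain ⟨c, hc⟩ := perp_decomp (closureO_le_Oq hχcl) hχe (φ⁻¹ a)
    rw [hχr (φ⁻¹ a)] at hc
    have h1 : φ (φ⁻¹ a) = a := φ.apply_symm_apply a
    rw [h1] at hc
    have h2 : χ⁻¹ (emap m a + c • (xb 0 + yb 0)) = emap m (φ⁻¹ a) := by
      rw [← hc, inv_apply, LinearEquiv.symm_apply_apply]
    rw [map_add, map_smul, inv_fix hχe] at h2
    have h3 : χ⁻¹ (emap m a) = emap m (φ⁻¹ a) + c • (xb 0 + yb 0) := vcancel h2.symm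
    simp only [h3, map_add, map_smul, rmap_emap, rmap_eV, rmap_xb, rmap_yb, smul_zero,
      add_zero]
-- ===== two isometries agreeing on the decomposition are equal =====
lemma eq_on_decomp {m : ℕ} {f f' : V (m+1) ≃ₗ[ZMod 2] V (m+1)}
    (h1 : ∀ a : V m, f (emap m a) = f' (emap m a))
    (hx : f (xb 0) = f' (xb 0)) (hy : f (yb 0) = f' (yb 0)) : f = f' := by
  apply LinearEquiv.ext
  intro v
  have e := decompV v
  calc f v = f (emap m (rmap m v) + v (0, false) • xb 0 + v (0, true) • yb 0) := by rw [← e]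
    _ = f' (emap m (rmap m v) + v (0, false) • xb 0 + v (0, true) • yb 0) := by
        rw [map_add, map_add, map_smul, map_smul, map_add, map_add, map_smul, map_smul,
          h1, hx, hy]
    _ = f' v := by rw [← e]

-- ===== the kernel of the reduction is {1, Tz e} =====
lemma kernelO {m : ℕ} (δ : V (m+1) ≃ₗ[ZMod 2] V (m+1)) (hδ : δ ∈ Oq (m+1))
    (hδe : δ (xb 0 + yb 0) = xb 0 + yb 0)
    (hδr : ∀ a : V m, rmap m (δ (emap m a)) = a) :
    δ = 1 ∨ δ = Tz (xb 0 + yb 0) := by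
  -- δ fixes the embedded complement pointwise
  have hfix : ∀ a : V m, δ (emap m a) = emap m a := by
    intro a
    obtain ⟨c, hc⟩ := perp_decomp hδ hδe a
    rw [hδr a] at hc
    have hq : qf (δ (emap m a)) = qf (emap m a) := hδ (emap m a)
    rw [hc, qf_add, qf_smul, qf_eV, omg2_smul_right, omg2_emap_eV, mul_zero, mul_one,
      add_zero] at hq
    have hc0 : c = 0 := add_eq_left.mp hq
    rw [hc0, zero_smul, add_zero] at hc
    exact hc
  -- analyze δ x₀
  set s : V m := rmap m (δ (xb 0)) with hsdef
  set α : ZMod 2 := (δ (xb 0)) (0, false) with hαdef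
  set β : ZMod 2 := (δ (xb 0)) (0, true) with hβdef
  have hdx : δ (xb 0) = emap m s + α • xb 0 + β • yb 0 := decompV _
  have hxeV : omg2 (xb (0 : Fin (m+1))) (xb 0 + yb 0) = 1 := omg2_xb_eV
  have hab : α + β = 1 := by
    have h := Oq_omg2 hδ (xb 0) (xb 0 + yb 0)
    rw [hδe, hxeV, hdx, omg2_add_left, omg2_add_left, omg2_emap_eV, omg2_smul_left,
      omg2_smul_left, omg2_xb_eV, omg2_yb_eV, mul_one, mul_one, zero_add] at h
    exact h
  have hs0 : s = 0 := by
    apply omg2_nondeg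
    intro a
    have h := Oq_omg2 hδ (xb 0) (emap m a)
    rw [hfix a, hdx, omg2_add_left, omg2_add_left, omg2_emap, omg2_smul_left,
      omg2_smul_left] at h
    have hxe : omg2 (xb (0 : Fin (m+1))) (emap m a) = 0 := by
      rw [omg2_comm, omg2_apply_xb, emap_apply_zero]
    have hye : omg2 (yb (0 : Fin (m+1))) (emap m a) = 0 := by
      rw [omg2_comm, omg2_apply_yb, emap_apply_zero]
    rw [hxe, hye, mul_zero, mul_zero, add_zero, add_zero] at h
    exact h
  rw [hs0, map_zero, zero_add] at hdx
  -- y₀ = e + x₀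
  have hyex : yb (0 : Fin (m+1)) = (xb 0 + yb 0) + xb 0 := by
    rw [add_comm (xb 0) (yb 0), add_assoc, vaddself, add_zero]
  rcases z2cases α with hα | hα
  · -- δ x = y, δ = Tz e
    have hβ1 : β = 1 := by rw [hα, zero_add] at hab; exact hab
    rw [hα, hβ1, zero_smul, zero_add, one_smul] at hdx
    have hdy : δ (yb 0) = xb 0 := by
      rw [hyex, map_add, hδe, hdx, add_assoc, vaddself, add_zero]
    right
    apply eq_on_decomp
    · intro a
      rw [hfix a, Tz_fix (omg2_eV_emap a)]
    · rw [hdx, Tz_apply, omg2_comm (xb 0 + yb 0) (xb 0), omg2_xb_eV, one_smul,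
        ← add_assoc, vaddself, zero_add]
    · rw [hdy, Tz_apply, omg2_comm (xb 0 + yb 0) (yb 0), omg2_yb_eV, one_smul,
        add_comm (xb 0) (yb 0), ← add_assoc, vaddself, zero_add]
  · -- δ x = x, δ = 1
    have hβ0 : β = 0 := by
      rw [hα] at hab
      have : (1 : ZMod 2) + β = 1 + 0 := by rw [add_zero]; exact hab
      exact add_left_cancel this
    rw [hα, hβ0, zero_smul, add_zero, one_smul] at hdx
    have hdy : δ (yb 0) = yb 0 := by
      rw [hyex, map_add, hδe, hdx, ← hyex]
    left
    apply eq_on_decomp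
    · intro a; rw [hfix a]; rfl
    · rw [hdx]; rfl
    · rw [hdy]; rfl
/-- (Dieudonné) For `g ≥ 3`, `O(2g, ℤ/2)` is generated by the
`ℤ/2`-transvections `𝕋_z` over all `z` with `q(z) = 1`. -/
theorem statement9 (g : ℕ) (hg : 3 ≤ g) :
    Oq g = Subgroup.closure
      {φ : V g ≃ₗ[ZMod 2] V g | ∃ z : V g, qf z = 1 ∧ φ = Tz z} := by
  have hset : {φ : V g ≃ₗ[ZMod 2] V g | ∃ z : V g, qf z = 1 ∧ φ = Tz z} = TsetO g := rfl
  rw [hset]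
  apply le_antisymm
  swap
  · exact closureO_le_Oq
  obtain ⟨m, rfl⟩ : ∃ m, g = m + 1 := ⟨g - 1, by omega⟩
  intro φ hφ
  have hqe : qf (φ (xb 0 + yb 0)) = 1 := by rw [mem_Oq.mp hφ _, qf_eV]
  obtain ⟨θ1, hθ1, hθ1e⟩ := moveO hg (φ (xb 0 + yb 0)) (xb 0 + yb 0) hqe qf_eV
  set φ1 : V (m+1) ≃ₗ[ZMod 2] V (m+1) := θ1 * φ with hφ1def
  have hφ1 : φ1 ∈ Oq (m+1) := Subgroup.mul_mem _ (closureO_le_Oq hθ1) hφ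
  have hφ1e : φ1 (xb 0 + yb 0) = xb 0 + yb 0 := hθ1e
  have hφ1inv : φ1⁻¹ ∈ Oq (m+1) := Subgroup.inv_mem _ hφ1
  have hφ1inve : φ1⁻¹ (xb 0 + yb 0) = xb 0 + yb 0 := inv_fix hφ1e
  -- the induced symplectic automorphism of the perp of e modulo e
  set ψ : V m ≃ₗ[ZMod 2] V m :=
    { toFun := fun a => rmap m (φ1 (emap m a))
      invFun := fun a => rmap m (φ1⁻¹ (emap m a))
      map_add' := fun a b => by simp only [map_add]
      map_smul' := fun c a => by simp only [map_smul, RingHom.id_apply]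
      left_inv := fun a => by
        show rmap m (φ1⁻¹ (emap m (rmap m (φ1 (emap m a))))) = a
        obtain ⟨c, hc⟩ := perp_decomp hφ1 hφ1e a
        have h2 : φ1⁻¹ (φ1 (emap m a)) = emap m a := by
          rw [inv_apply]; exact φ1.symm_apply_apply _
        rw [vcancel hc, map_add, map_smul, h2, hφ1inve, map_add, map_smul, rmap_emap,
          rmap_eV, smul_zero, add_zero]
      right_inv := fun a => by
        show rmap m (φ1 (emap m (rmap m (φ1⁻¹ (emap m a))))) = a
        obtain ⟨c, hc⟩ := perp_decomp hφ1inv hφ1inve a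
        have h2 : φ1 (φ1⁻¹ (emap m a)) = emap m a := by
          rw [inv_apply]; exact φ1.apply_symm_apply _
        rw [vcancel hc, map_add, map_smul, h2, hφ1e, map_add, map_smul, rmap_emap,
          rmap_eV, smul_zero, add_zero] } with hψdef
  have hψapp : ∀ a : V m, rmap m (φ1 (emap m a)) = ψ a := fun a => rfl
  have hψsp : ψ ∈ SpS m := by
    intro a b
    rw [← hψapp, ← hψapp, ← omg2_emap (rmap m (φ1 (emap m a)))]
    obtain ⟨c, hc⟩ := perp_decomp hφ1 hφ1e a
    obtain ⟨d, hd⟩ := perp_decomp hφ1 hφ1e b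
    rw [vcancel hc, vcancel hd, omg2_expand, omg2_self,
      perp_img hφ1 hφ1e _ (omg2_emap_eV a),
      omg2_comm (xb 0 + yb 0) (φ1 (emap m b)), perp_img hφ1 hφ1e _ (omg2_emap_eV b),
      Oq_omg2 hφ1, omg2_emap]
    simp only [mul_zero, add_zero]
  obtain ⟨χ, hχcl, hχe, hχr⟩ := pullback ψ (sp_gen m ψ hψsp)
  have hχOq : χ ∈ Oq (m+1) := closureO_le_Oq hχcl
  set δ : V (m+1) ≃ₗ[ZMod 2] V (m+1) := χ⁻¹ * φ1 with hδdef
  have hδOq : δ ∈ Oq (m+1) := Subgroup.mul_mem _ (Subgroup.inv_mem _ hχOq) hφ1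
  have hδe : δ (xb 0 + yb 0) = xb 0 + yb 0 := by
    show χ⁻¹ (φ1 (xb 0 + yb 0)) = xb 0 + yb 0
    rw [hφ1e, inv_fix hχe]
  have hδr : ∀ a : V m, rmap m (δ (emap m a)) = a := by
    intro a
    obtain ⟨c, hc⟩ := perp_decomp hφ1 hφ1e a
    rw [hψapp a] at hc
    obtain ⟨c', hc'⟩ := perp_decomp hχOq hχe a
    rw [hχr a] at hc'
    -- χ⁻¹ (emap (ψ a)) = emap a + c' • e
    have h4 : χ⁻¹ (emap m (ψ a) + c' • (xb 0 + yb 0)) = emap m a := by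
      rw [← hc', inv_apply, LinearEquiv.symm_apply_apply]
    rw [map_add, map_smul, inv_fix hχe] at h4
    have h5 : χ⁻¹ (emap m (ψ a)) = emap m a + c' • (xb 0 + yb 0) := vcancel h4.symm
    show rmap m (χ⁻¹ (φ1 (emap m a))) = a
    rw [hc, map_add, map_smul, inv_fix hχe, h5, map_add, map_add, map_smul, map_smul,
      rmap_emap, rmap_eV, smul_zero, smul_zero, add_zero, add_zero]
  have hφ1cl : φ1 ∈ Subgroup.closure (TsetO (m+1)) := by
    rcases kernelO δ hδOq hδe hδr with h1 | h1
    · have h2 : χ = φ1 := inv_mul_eq_one.mp h1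
      rw [← h2]
      exact hχcl
    · have h2 : φ1 = χ * Tz (xb 0 + yb 0) := by
        rw [← h1, hδdef]
        group
      rw [h2]
      exact Subgroup.mul_mem _ hχcl (Subgroup.subset_closure ⟨xb 0 + yb 0, qf_eV, rfl⟩)
  have hf : θ1⁻¹ * φ1 = φ := by
    rw [hφ1def]
    group
  rw [← hf]
  exact Subgroup.mul_mem _ (Subgroup.inv_mem _ hθ1) hφ1cl
end Paper
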